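/- Let m be an integer, and let z ∈ ℚ with f_m^{C_6}(z) ≠ 0. Then the identity h(z)·p(z) + f_m^{C_6}(z)·q(z) = 27(m^2+3m+9) holds, where h(z) = (m^2+3m+9)·z(z+1)(z-1)(z+2)(2z+1), p(z) = 84z^5 - 42(4m+1)z^4 - 112(3m+11)z^3 + 7(22m-153)z^2 + 2(161m+219)z + 27m + 242, and q(z) = (m^2+3m+9)(-168z^4 - 336z^3 + 154z^2 + 322z + 27). -/

import Mathlib

def fC6 (m z : ℚ) : ℚ :=
  z^6 - 2*m*z^5 - 5*(m+3)*z^4 - 20*z^3 + 5*m*z^2 + 2*(m+3)*z + 1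

theorem fC6_bezout (m z : ℚ) :
    z*(z+1)*(z-1)*(z+2)*(2*z+1) *
      (84*z^5 - 42*(4*m+1)*z^4 - 112*(3*m+11)*z^3
        + 7*(22*m-153)*z^2 + 2*(161*m+219)*z + 27*m + 242)
    + fC6 m z * (-168*z^4 - 336*z^3 + 154*z^2 + 322*z + 27) = 27 := by
  unfold fC6
  ring

theorem stmt14_general (m : ℤ) (z : ℚ) :
    ((m:ℚ)^2+3*m+9) * (z*(z+1)*(z-1)*(z+2)*(2*z+1)) *
      (84*z^5 - 42*(4*(m:ℚ)+1)*z^4 - 112*(3*m+11)*z^3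
        + 7*(22*m-153)*z^2 + 2*(161*m+219)*z + 27*m + 242)
    + fC6 m z *
      (((m:ℚ)^2+3*m+9) * (-168*z^4 - 336*z^3 + 154*z^2 + 322*z + 27))
    = 27*((m:ℚ)^2+3*m+9) := by
  linear_combination ((m:ℚ)^2+3*m+9) * fC6_bezout m z

theorem stmt14 (m : ℤ) (z : ℚ) (hz : fC6 m z ≠ 0) :
    ((m:ℚ)^2+3*m+9) * (z*(z+1)*(z-1)*(z+2)*(2*z+1)) *
      (84*z^5 - 42*(4*(m:ℚ)+1)*z^4 - 112*(3*m+11)*z^3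
        + 7*(22*m-153)*z^2 + 2*(161*m+219)*z + 27*m + 242)
    + fC6 m z *
      (((m:ℚ)^2+3*m+9) * (-168*z^4 - 336*z^3 + 154*z^2 + 322*z + 27))
    = 27*((m:ℚ)^2+3*m+9) :=
  stmt14_general m z
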